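/- arXiv:1710.01707 — 3 statements merged into one kernel-verified Lean document; each statement's English description precedes it below -/
import Mathlib

section
/- Let β ∈ W^{2,p}(S¹) for some p > 2, and define γ(t) = -β(t)²/2, ζ(t) = (1/2)∫₀ᵗ (β(s)² - β'(s)²) ds, u_β(x) = |x|γ(x/|x|)·(x/|x|) + |x|ζ(x/|x|)·(x/|x|)^⊥ (where (x₁,x₂)^⊥ = (-x₂,x₁)), and v_β(x) = |x|β(x/|x|). Assume ∫_{S¹}(β² - β'²) dt = 0. Then sym Du_β + (1/2) Dv_β ⊗ Dv_β = 0 almost everywhere on ℝ² \ {0}, i.e., the pair (u_β, v_β) is an isometric immersion in the von Kármán sense. -/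
/-!
Both fields are 1-homogeneous, so their gradients are 0-homogeneous: for `cone F = |x| F(θ)` the
gradient is `F(θ) e + F'(θ) e^⊥`. In the polar frame `(e, e^⊥)` the strain of
`u = |x| (γ e + ζ e^⊥)`, `v = |x| β` then has entries `γ + β²/2`, `(γ' + β β')/2` and
`ζ' + γ + β'²/2`, which vanish for `γ = -β²/2` and `ζ' = (β² - β'²)/2`. The computation is valid
wherever `ang` is differentiable, in particular off the real axis, a null set.
-/

open MeasureTheory Real Set
noncomputable section

/-- Euclidean norm on `ℝ × ℝ`. -/
def n2 (x : ℝ × ℝ) : ℝ := Real.sqrt (x.1 ^ 2 + x.2 ^ 2)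

/-- The open unit disk. -/
def B1 : Set (ℝ × ℝ) := {x | n2 x < 1}

/-- Partial derivative in direction `i`. -/
def pd (i : Fin 2) (f : ℝ × ℝ → ℝ) (x : ℝ × ℝ) : ℝ :=
  fderiv ℝ f x (if i = 0 then (1, 0) else (0, 1))

/-- Entries of the Hessian. -/
def hess (f : ℝ × ℝ → ℝ) (i j : Fin 2) (x : ℝ × ℝ) : ℝ := pd i (pd j f) x

/-- Hessian determinant (the linearized Gauss curvature). -/
def detHess (f : ℝ × ℝ → ℝ) (x : ℝ × ℝ) : ℝ :=
  hess f 0 0 x * hess f 1 1 x - hess f 0 1 x * hess f 1 0 x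

/-- Squared Frobenius norm of the Hessian. -/
def hnormSq (f : ℝ × ℝ → ℝ) (x : ℝ × ℝ) : ℝ := ∑ i : Fin 2, ∑ j : Fin 2, (hess f i j x) ^ 2

/-- Components of an `ℝ²`-valued map. -/
def uc (i : Fin 2) (u : ℝ × ℝ → ℝ × ℝ) : ℝ × ℝ → ℝ :=
  fun x => if i = 0 then (u x).1 else (u x).2

/-- Entries of the membrane strain `sym Du + ½ Dv ⊗ Dv`. -/
def memb (u : ℝ × ℝ → ℝ × ℝ) (v : ℝ × ℝ → ℝ) (i j : Fin 2) (x : ℝ × ℝ) : ℝ :=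
  (pd i (uc j u) x + pd j (uc i u) x) / 2 + (pd i v x * pd j v x) / 2

/-- Squared Frobenius norm of the membrane strain. -/
def membSq (u : ℝ × ℝ → ℝ × ℝ) (v : ℝ × ℝ → ℝ) (x : ℝ × ℝ) : ℝ :=
  ∑ i : Fin 2, ∑ j : Fin 2, (memb u v i j x) ^ 2

/-- Unit tangent to the circle. -/
def eT (t : ℝ) : ℝ × ℝ := (Real.cos t, Real.sin t)

/-- Rotated unit vector. -/
def eTperp (t : ℝ) : ℝ × ℝ := (-Real.sin t, Real.cos t)

/-- Angle of a point of the plane. -/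
def ang (x : ℝ × ℝ) : ℝ := Complex.arg ⟨x.1, x.2⟩

/-- The conical out-of-plane displacement `v_β(x) = |x| β(x̂)`. -/
def vbeta (β : ℝ → ℝ) (x : ℝ × ℝ) : ℝ := n2 x * β (ang x)

/-- `ζ(t) = ½∫₀ᵗ (β² - β'²)`. -/
def zbeta (β : ℝ → ℝ) (t : ℝ) : ℝ := (1 / 2) * ∫ s in (0:ℝ)..t, (β s ^ 2 - (deriv β s) ^ 2)

/-- The conical in-plane displacement `u_β`. -/
def ubeta (β : ℝ → ℝ) (x : ℝ × ℝ) : ℝ × ℝ :=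
  (n2 x * (-(β (ang x)) ^ 2 / 2)) • eT (ang x) + (n2 x * zbeta β (ang x)) • eTperp (ang x)

/-- `β ∈ W^{2,p}(S¹)`: a `2π`-periodic `C¹` function whose derivative is (a.e.)
differentiable with second derivative in `L^p`. -/
def MemW2p (p : ℝ) (β : ℝ → ℝ) : Prop :=
  Function.Periodic β (2 * π) ∧ ContDiff ℝ 1 β ∧
    (∀ᵐ t : ℝ, DifferentiableAt ℝ (deriv β) t) ∧
    MemLp (deriv (deriv β)) (ENNReal.ofReal p) (volume.restrict (Set.Ioc (0:ℝ) (2 * π)))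

def cone (F : ℝ → ℝ) (x : ℝ × ℝ) : ℝ := n2 x * F (ang x)

/-- `ubeta β` is definitionally `coneField (fun t => -β t ^ 2 / 2) (zbeta β)`, and `vbeta β` is
`cone β`. -/
def coneField (γ ζ : ℝ → ℝ) (x : ℝ × ℝ) : ℝ × ℝ :=
  (n2 x * γ (ang x)) • eT (ang x) + (n2 x * ζ (ang x)) • eTperp (ang x)

open ContinuousLinearMap

lemma norm_mk_eq_n2 (x : ℝ × ℝ) : ‖(⟨x.1, x.2⟩ : ℂ)‖ = n2 x := by
  rw [Complex.norm_def, Complex.normSq_apply, n2]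
  congr 1; ring

lemma n2_pos {x : ℝ × ℝ} (hx : x ≠ 0) : 0 < n2 x := by
  rw [← norm_mk_eq_n2, norm_pos_iff]
  contrapose! hx
  simpa [Complex.ext_iff, Prod.ext_iff] using hx

lemma hasFDerivAt_n2 {x : ℝ × ℝ} (hx : x ≠ 0) :
    HasFDerivAt n2 ((x.1 / n2 x) • fst ℝ ℝ ℝ + (x.2 / n2 x) • snd ℝ ℝ ℝ) x := by
  have h1 : HasFDerivAt (fun y : ℝ × ℝ => y.1) (fst ℝ ℝ ℝ) x := hasFDerivAt_fst
  have h2 : HasFDerivAt (fun y : ℝ × ℝ => y.2) (snd ℝ ℝ ℝ) x := hasFDerivAt_snd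
  have hpos : 0 < n2 x := n2_pos hx
  refine ((hasDerivAt_sqrt (ne_of_gt (sqrt_pos.mp hpos))).comp_hasFDerivAt x
    ((h1.pow 2).add (h2.pow 2))).congr_fderiv ?_
  rw [← n2]
  ext <;> simp only [one_div, mul_inv_rev, Nat.add_one_sub_one, pow_one, nsmul_eq_mul, Nat.cast_ofNat,
    smul_add, add_comp, smul_comp, fst_comp_inl, snd_comp_inl, fst_comp_inr, snd_comp_inr, smul_zero,
    add_zero, zero_add, smul_apply, id_apply, smul_eq_mul, mul_one] <;> field_simp

lemma hasFDerivAt_ang {x : ℝ × ℝ} (hx : 0 < x.1 ∨ x.2 ≠ 0) :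
    HasFDerivAt ang ((-x.2 / n2 x ^ 2) • fst ℝ ℝ ℝ + (x.1 / n2 x ^ 2) • snd ℝ ℝ ℝ) x := by
  have hz : (⟨x.1, x.2⟩ : ℂ) ∈ Complex.slitPlane := Complex.mem_slitPlane_iff.mpr hx
  have hlog := ((Complex.hasDerivAt_log hz).hasFDerivAt.restrictScalars ℝ).comp x
    Complex.equivRealProdCLM.symm.hasFDerivAt
  have hang : ang = Complex.imCLM ∘ Complex.log ∘ Complex.equivRealProdCLM.symm := by
    funext y; exact (Complex.log_im _).symm
  rw [hang]
  refine (Complex.imCLM.hasFDerivAt.comp x hlog).congr_fderiv ?_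
  have hnormSq : Complex.normSq ⟨x.1, x.2⟩ = n2 x ^ 2 := by
    rw [← Complex.sq_norm, norm_mk_eq_n2]
  ext <;> simp [Complex.equivRealProdCLM_symm_apply, Complex.inv_im, Complex.inv_re, hnormSq]

lemma cos_ang {x : ℝ × ℝ} (hx : x ≠ 0) : cos (ang x) = x.1 / n2 x := by
  have hz : (⟨x.1, x.2⟩ : ℂ) ≠ 0 := by
    contrapose! hx
    simpa [Complex.ext_iff, Prod.ext_iff] using hx
  rw [ang, Complex.cos_arg hz, norm_mk_eq_n2]

lemma sin_ang (x : ℝ × ℝ) : sin (ang x) = x.2 / n2 x := by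
  rw [ang, Complex.sin_arg, norm_mk_eq_n2]

lemma hasFDerivAt_cone {F : ℝ → ℝ} {F' : ℝ} {x : ℝ × ℝ} (hx : 0 < x.1 ∨ x.2 ≠ 0)
    (hF : HasDerivAt F F' (ang x)) :
    HasFDerivAt (cone F)
      ((F (ang x) * cos (ang x) - F' * sin (ang x)) • fst ℝ ℝ ℝ +
        (F (ang x) * sin (ang x) + F' * cos (ang x)) • snd ℝ ℝ ℝ) x := by
  have hx0 : x ≠ 0 := by rintro rfl; simp at hx
  refine ((hasFDerivAt_n2 hx0).mul (hF.comp_hasFDerivAt x (hasFDerivAt_ang hx))).congr_fderiv ?_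
  rw [cos_ang hx0, sin_ang]
  ext <;> simp only [smul_add, Function.comp_apply, add_comp, smul_comp, fst_comp_inl, snd_comp_inl,
    fst_comp_inr, snd_comp_inr, smul_zero, add_zero, zero_add, add_apply, smul_apply, id_apply,
    smul_eq_mul, mul_one] <;> field_simp <;> ring

lemma pd_zero_cone {F : ℝ → ℝ} {F' : ℝ} {x : ℝ × ℝ} (hx : 0 < x.1 ∨ x.2 ≠ 0)
    (hF : HasDerivAt F F' (ang x)) :
    pd 0 (cone F) x = F (ang x) * cos (ang x) - F' * sin (ang x) := by
  simp [pd, (hasFDerivAt_cone hx hF).fderiv]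

lemma pd_one_cone {F : ℝ → ℝ} {F' : ℝ} {x : ℝ × ℝ} (hx : 0 < x.1 ∨ x.2 ≠ 0)
    (hF : HasDerivAt F F' (ang x)) :
    pd 1 (cone F) x = F (ang x) * sin (ang x) + F' * cos (ang x) := by
  simp [pd, (hasFDerivAt_cone hx hF).fderiv]

lemma uc_zero_coneField (γ ζ : ℝ → ℝ) :
    uc 0 (coneField γ ζ) = cone fun t => γ t * cos t - ζ t * sin t := by
  ext x
  simp only [uc, Fin.isValue, ↓reduceIte, coneField, eT, Prod.smul_mk, smul_eq_mul,
    eTperp, mul_neg, Prod.mk_add_mk, cone]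
  ring

lemma uc_one_coneField (γ ζ : ℝ → ℝ) :
    uc 1 (coneField γ ζ) = cone fun t => γ t * sin t + ζ t * cos t := by
  ext x
  simp only [uc, Fin.isValue, one_ne_zero, ↓reduceIte, coneField, eT, Prod.smul_mk, smul_eq_mul,
    eTperp, mul_neg, Prod.mk_add_mk, cone]
  ring

lemma memb_coneField_cone_eq_zero {γ ζ β : ℝ → ℝ} {γ' ζ' β' : ℝ} {x : ℝ × ℝ}
    (hx : 0 < x.1 ∨ x.2 ≠ 0) (hγ : HasDerivAt γ γ' (ang x)) (hζ : HasDerivAt ζ ζ' (ang x))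
    (hβ : HasDerivAt β β' (ang x))
    (hrr : γ (ang x) + β (ang x) ^ 2 / 2 = 0) (hrθ : γ' + β (ang x) * β' = 0)
    (hθθ : ζ' + γ (ang x) + β' ^ 2 / 2 = 0) (i j : Fin 2) :
    memb (coneField γ ζ) (cone β) i j x = 0 := by
  set t := ang x
  have hu₀ : HasDerivAt (fun t => γ t * cos t - ζ t * sin t)
      (γ' * cos t - γ t * sin t - (ζ' * sin t + ζ t * cos t)) t :=
    ((hγ.fun_mul (hasDerivAt_cos t)).fun_sub (hζ.fun_mul (hasDerivAt_sin t))).congr_deriv (by ring)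
  have hu₁ : HasDerivAt (fun t => γ t * sin t + ζ t * cos t)
      (γ' * sin t + γ t * cos t + (ζ' * cos t - ζ t * sin t)) t :=
    ((hγ.fun_mul (hasDerivAt_sin t)).fun_add (hζ.fun_mul (hasDerivAt_cos t))).congr_deriv (by ring)
  fin_cases i <;> fin_cases j <;>
    simp only [memb, Fin.isValue, Fin.zero_eta, Fin.mk_one, uc_zero_coneField, uc_one_coneField,
      pd_zero_cone hx hu₀, pd_one_cone hx hu₀, pd_zero_cone hx hu₁, pd_one_cone hx hu₁,
      pd_zero_cone hx hβ, pd_one_cone hx hβ]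
  · linear_combination cos t ^ 2 * hrr - cos t * sin t * hrθ + sin t ^ 2 * hθθ
  · linear_combination cos t * sin t * hrr + (cos t ^ 2 - sin t ^ 2) / 2 * hrθ - sin t * cos t * hθθ
  · linear_combination cos t * sin t * hrr + (cos t ^ 2 - sin t ^ 2) / 2 * hrθ - sin t * cos t * hθθ
  · linear_combination sin t ^ 2 * hrr + cos t * sin t * hrθ + cos t ^ 2 * hθθ

lemma hasDerivAt_zbeta {β : ℝ → ℝ} (hβ : Continuous β) (hβ' : Continuous (deriv β)) (t : ℝ) :
    HasDerivAt (zbeta β) ((β t ^ 2 - deriv β t ^ 2) / 2) t := by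
  have hcont : Continuous fun s => β s ^ 2 - deriv β s ^ 2 := (hβ.pow 2).sub (hβ'.pow 2)
  exact ((intervalIntegral.integral_hasDerivAt_right (hcont.intervalIntegrable 0 t)
    (hcont.stronglyMeasurableAtFilter volume _) hcont.continuousAt).const_mul (1 / 2)).congr_deriv
    (by ring)

lemma ae_snd_ne_zero : ∀ᵐ x : ℝ × ℝ, x.2 ≠ 0 :=
  Measure.quasiMeasurePreserving_snd.ae (Measure.ae_ne volume 0)

theorem vonKarman_isometry_of_cone_general (p : ℝ) (β : ℝ → ℝ)
    (hβ : MemW2p p β) :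
    ∀ᵐ x : ℝ × ℝ, x ≠ 0 → ∀ i j : Fin 2, memb (ubeta β) (vbeta β) i j x = 0 := by
  have hβd : Differentiable ℝ β := hβ.2.1.differentiable one_ne_zero
  have hβ' : Continuous (deriv β) := hβ.2.1.continuous_deriv le_rfl
  filter_upwards [ae_snd_ne_zero] with x hx _ i j
  have hb := (hβd (ang x)).hasDerivAt
  exact memb_coneField_cone_eq_zero (Or.inr hx) (((hb.fun_pow 2).fun_neg).div_const 2)
    (hasDerivAt_zbeta hβd.continuous hβ' _) hb (by ring) (by ring) (by ring) i j

/-- the conical displacements `(u_β, v_β)` form a von Kármán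
isometric immersion: `sym Du_β + ½ Dv_β ⊗ Dv_β = 0` a.e. on `ℝ² \ {0}`. -/
theorem vonKarman_isometry_of_cone (p : ℝ) (hp : 2 < p) (β : ℝ → ℝ)
    (hβ : MemW2p p β)
    (hzero : ∫ t in (0:ℝ)..(2 * π), (β t ^ 2 - (deriv β t) ^ 2) = 0) :
    ∀ᵐ x : ℝ × ℝ, x ≠ 0 → ∀ i j : Fin 2, memb (ubeta β) (vbeta β) i j x = 0 :=
  vonKarman_isometry_of_cone_general p β hβ
end
end

section
/- Let β ∈ W^{2,p}(S¹) with 2 < p and suppose ∫_{S¹}|β + β''| dt > 0. Define v_β(x) = |x|β(x/|x|) on the unit disk B₁ ⊂ ℝ². Then D²v_β ∉ L^p(B₁) for any p ≥ 2. -/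
open MeasureTheory Real Set
noncomputable section

open scoped ENNReal

/-!
In polar coordinates `x = r (cos t, sin t)` the gradient of `v_β` is
`β(t) e(t) + β'(t) e⊥(t)`, a function of `t` alone, whose `t`-derivative is `(β + β'')(t) e⊥(t)`;
hence `D²v_β(x) = (β + β'')(t) / r · e⊥(t) ⊗ e⊥(t)` and `|D²v_β| = |β + β''|(t) / r`.
The polar volume element `r dr dt` turns `∫_{B₁} |D²v_β|^q` into
`(∫₀¹ r^{1-q} dr) · (∫ |β + β''|^q dt)`; the first factor is infinite for `q ≥ 2`,
the second is positive because `β + β''` does not vanish a.e. on a period.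
-/

def covec (v : ℝ × ℝ) : ℝ × ℝ →L[ℝ] ℝ :=
  v.1 • ContinuousLinearMap.fst ℝ ℝ ℝ + v.2 • ContinuousLinearMap.snd ℝ ℝ ℝ

@[simp]
lemma covec_apply (v h : ℝ × ℝ) : covec v h = v.1 * h.1 + v.2 * h.2 := by
  simp only [covec, add_apply, smul_apply, ContinuousLinearMap.coe_fst',
    ContinuousLinearMap.coe_snd', smul_eq_mul]

lemma covec_comm (u v : ℝ × ℝ) : covec u v = covec v u := by
  simp only [covec_apply]; ring

def unitVec (i : Fin 2) : ℝ × ℝ := if i = 0 then (1, 0) else (0, 1)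

lemma pd_eq_fderiv_unitVec (i : Fin 2) (f : ℝ × ℝ → ℝ) (x : ℝ × ℝ) :
    pd i f x = fderiv ℝ f x (unitVec i) := rfl

lemma sq_n2 (x : ℝ × ℝ) : n2 x ^ 2 = x.1 ^ 2 + x.2 ^ 2 :=
  Real.sq_sqrt (by positivity)

lemma norm_equivRealProd_symm (x : ℝ × ℝ) : ‖Complex.equivRealProdCLM.symm x‖ = n2 x := by
  rw [Complex.norm_def, Complex.normSq_apply, n2, Complex.equivRealProdCLM_symm_apply_re,
    Complex.equivRealProdCLM_symm_apply_im, sq, sq]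

lemma n2_mul_cos_ang (x : ℝ × ℝ) : n2 x * cos (ang x) = x.1 := by
  rw [← norm_equivRealProd_symm]; exact Complex.norm_mul_cos_arg _

lemma n2_mul_sin_ang (x : ℝ × ℝ) : n2 x * sin (ang x) = x.2 := by
  rw [← norm_equivRealProd_symm]; exact Complex.norm_mul_sin_arg _

lemma n2_polarCoord_symm (p : ℝ × ℝ) : n2 (polarCoord.symm p) = |p.1| := by
  have h : (p.1 * cos p.2) ^ 2 + (p.1 * sin p.2) ^ 2 = p.1 ^ 2 := by
    linear_combination p.1 ^ 2 * cos_sq_add_sin_sq p.2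
  rw [n2, polarCoord_symm_apply, h, Real.sqrt_sq_eq_abs]

lemma n2_pos_of_mem_source {x : ℝ × ℝ} (hx : x ∈ polarCoord.source) : 0 < n2 x :=
  (polarCoord.map_source hx).1

lemma hasDerivAt_eT (t : ℝ) : HasDerivAt eT (eTperp t) t :=
  (hasDerivAt_cos t).prodMk (hasDerivAt_sin t)

lemma hasDerivAt_eTperp (t : ℝ) : HasDerivAt eTperp (-eT t) t :=
  (hasDerivAt_sin t).neg.prodMk (hasDerivAt_cos t)

lemma hasFDerivAt_n2_s1 {x : ℝ × ℝ} (hx : x ∈ polarCoord.source) :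
    HasFDerivAt n2 (covec (eT (ang x))) x := by
  have hr := n2_pos_of_mem_source hx
  have hsq : HasFDerivAt (fun y : ℝ × ℝ => y.1 ^ 2 + y.2 ^ 2) (covec (2 • x)) x := by
    refine ((hasFDerivAt_fst.pow 2).add (hasFDerivAt_snd.pow 2)).congr_fderiv
      (ContinuousLinearMap.ext fun h => ?_)
    simp only [covec_apply, add_apply, smul_apply, ContinuousLinearMap.coe_fst',
      ContinuousLinearMap.coe_snd', smul_eq_mul, nsmul_eq_mul, Prod.fst_mul, Prod.snd_mul,
      Prod.fst_ofNat, Prod.snd_ofNat, Nat.cast_ofNat, pow_one, Nat.add_one_sub_one]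
  refine ((Real.hasDerivAt_sqrt (sq_n2 x ▸ (pow_pos hr 2).ne')).comp_hasFDerivAt x
    hsq).congr_fderiv (ContinuousLinearMap.ext fun h => ?_)
  rw [← n2]
  simp only [smul_apply, covec_apply, smul_eq_mul, nsmul_eq_mul, Prod.fst_mul, Prod.snd_mul,
    Prod.fst_ofNat, Prod.snd_ofNat, Nat.cast_ofNat, eT]
  rw [← n2_mul_cos_ang x, ← n2_mul_sin_ang x]
  field_simp

lemma hasFDerivAt_ang_s1 {x : ℝ × ℝ} (hx : x ∈ polarCoord.source) :
    HasFDerivAt ang (covec ((n2 x)⁻¹ • eTperp (ang x))) x := by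
  have hz : Complex.equivRealProdCLM.symm x ∈ Complex.slitPlane := hx
  have hlog := ((Complex.hasDerivAt_log hz).hasFDerivAt.restrictScalars ℝ).comp x
    Complex.equivRealProdCLM.symm.hasFDerivAt
  have hang : ang = Complex.imCLM ∘ Complex.log ∘ Complex.equivRealProdCLM.symm := by
    ext y
    simp only [ang, Function.comp_apply, Complex.imCLM_apply, Complex.log_im]
    rfl
  refine HasFDerivAt.congr_fderiv (f := ang)
    (by rw [hang]; exact Complex.imCLM.hasFDerivAt.comp x hlog)
    (ContinuousLinearMap.ext fun h => ?_)
  have hr := n2_pos_of_mem_source hx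
  simp only [ContinuousLinearMap.comp_apply, ContinuousLinearEquiv.coe_coe,
    ContinuousLinearMap.coe_restrictScalars', ContinuousLinearMap.toSpanSingleton_apply,
    smul_eq_mul, Complex.imCLM_apply, Complex.mul_im, Complex.equivRealProdCLM_symm_apply_re,
    Complex.equivRealProdCLM_symm_apply_im, Complex.inv_re, Complex.inv_im,
    Complex.normSq_apply, covec_apply, Prod.smul_fst, Prod.smul_snd, eTperp]
  rw [← n2_mul_cos_ang x, ← n2_mul_sin_ang x]
  field_simp
  rw [cos_sq_add_sin_sq, one_mul]

def coneGrad (β : ℝ → ℝ) (t : ℝ) : ℝ × ℝ := β t • eT t + deriv β t • eTperp t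

section Cone

variable {β : ℝ → ℝ}

lemma hasFDerivAt_vbeta {x : ℝ × ℝ} (hx : x ∈ polarCoord.source)
    (hβ : DifferentiableAt ℝ β (ang x)) :
    HasFDerivAt (vbeta β) (covec (coneGrad β (ang x))) x := by
  have hr := n2_pos_of_mem_source hx
  refine ((hasFDerivAt_n2_s1 hx).mul
    (hβ.hasDerivAt.comp_hasFDerivAt x (hasFDerivAt_ang_s1 hx))).congr_fderiv
    (ContinuousLinearMap.ext fun h => ?_)
  simp only [Function.comp_apply, add_apply, smul_apply, covec_apply, smul_eq_mul,
    Prod.smul_fst, Prod.smul_snd, Prod.fst_add, Prod.snd_add, coneGrad]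
  field_simp
  ring

lemma hasDerivAt_coneGrad (hβ : Differentiable ℝ β) {t : ℝ}
    (hβ' : DifferentiableAt ℝ (deriv β) t) :
    HasDerivAt (coneGrad β) ((β t + deriv (deriv β) t) • eTperp t) t := by
  refine (((hβ t).hasDerivAt.smul (hasDerivAt_eT t)).add
    (hβ'.hasDerivAt.smul (hasDerivAt_eTperp t))).congr_deriv ?_
  simp only [smul_neg, add_smul]
  abel

lemma hess_vbeta (hβ : Differentiable ℝ β) {x : ℝ × ℝ} (hx : x ∈ polarCoord.source)
    (hβ' : DifferentiableAt ℝ (deriv β) (ang x)) (i j : Fin 2) :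
    hess (vbeta β) i j x = (β (ang x) + deriv (deriv β) (ang x)) / n2 x *
      covec (eTperp (ang x)) (unitVec i) * covec (eTperp (ang x)) (unitVec j) := by
  have hpd : pd j (vbeta β) =ᶠ[nhds x] fun y => covec (unitVec j) (coneGrad β (ang y)) :=
    Filter.eventually_of_mem (polarCoord.open_source.mem_nhds hx) fun y hy => by
      rw [pd_eq_fderiv_unitVec, (hasFDerivAt_vbeta hy (hβ _)).fderiv, covec_comm]
  have hd : HasFDerivAt (fun y => covec (unitVec j) (coneGrad β (ang y))) _ x :=
    ((covec (unitVec j)).hasFDerivAt.comp_hasDerivAt _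
      (hasDerivAt_coneGrad hβ hβ')).comp_hasFDerivAt x (hasFDerivAt_ang_s1 hx)
  rw [hess, pd_eq_fderiv_unitVec, hpd.fderiv_eq, hd.fderiv]
  simp only [FunLike.coe_smul, Pi.smul_apply, covec_apply, smul_eq_mul, Prod.smul_fst,
    Prod.smul_snd]
  ring

lemma hnormSq_vbeta (hβ : Differentiable ℝ β) {x : ℝ × ℝ} (hx : x ∈ polarCoord.source)
    (hβ' : DifferentiableAt ℝ (deriv β) (ang x)) :
    hnormSq (vbeta β) x = ((β (ang x) + deriv (deriv β) (ang x)) / n2 x) ^ 2 := by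
  simp only [hnormSq, Fin.sum_univ_two, hess_vbeta hβ hx hβ', unitVec, covec_apply, eTperp,
    Fin.isValue, ↓reduceIte, one_ne_zero, mul_zero, mul_one, add_zero, zero_add]
  linear_combination ((β (ang x) + deriv (deriv β) (ang x)) / n2 x) ^ 2 *
    (sin (ang x) ^ 2 + cos (ang x) ^ 2 + 1) * sin_sq_add_cos_sq (ang x)

lemma sqrt_hnormSq_vbeta_polarCoord_symm (hβ : Differentiable ℝ β) {p : ℝ × ℝ}
    (hp : p ∈ polarCoord.target) (hβ' : DifferentiableAt ℝ (deriv β) p.2) :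
    √(hnormSq (vbeta β) (polarCoord.symm p)) = |β p.2 + deriv (deriv β) p.2| / p.1 := by
  have hr : n2 (polarCoord.symm p) = p.1 := congrArg Prod.fst (polarCoord.right_inv hp)
  have ht : ang (polarCoord.symm p) = p.2 := congrArg Prod.snd (polarCoord.right_inv hp)
  rw [hnormSq_vbeta hβ (polarCoord.map_target hp) (ht ▸ hβ'), hr, ht,
    Real.sqrt_sq_eq_abs, abs_div, abs_of_pos (a := p.1) hp.1]

end Cone

lemma measurableSet_B1 : MeasurableSet B1 :=
  measurableSet_lt (by unfold n2; fun_prop) measurable_const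

lemma lintegral_B1_eq_polar (F : ℝ × ℝ → ℝ≥0∞) :
    ∫⁻ x in B1, F x =
      ∫⁻ p in Ioo 0 1 ×ˢ Ioo (-π) π, ENNReal.ofReal p.1 * F (polarCoord.symm p) := by
  have hpre : polarCoord.symm ⁻¹' B1 ∩ polarCoord.target = Ioo 0 1 ×ˢ Ioo (-π) π := by
    ext ⟨r, t⟩
    simp only [mem_inter_iff, mem_preimage, B1, mem_ofPred_eq, n2_polarCoord_symm,
      polarCoord_target, mem_prod, mem_Ioi, mem_Ioo]
    constructor
    · rintro ⟨h1, h2, h3⟩; exact ⟨⟨h2, (le_abs_self r).trans_lt h1⟩, h3⟩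
    · rintro ⟨⟨h1, h2⟩, h3⟩; exact ⟨by rwa [abs_of_pos h1], h1, h3⟩
  rw [← lintegral_indicator measurableSet_B1, ← lintegral_comp_polarCoord_symm, ← hpre,
    ← setLIntegral_indicator (measurableSet_B1.preimage continuous_polarCoord_symm.measurable)]
  refine setLIntegral_congr_fun polarCoord.open_target.measurableSet fun p _ => ?_
  by_cases h : polarCoord.symm p ∈ B1
  · rw [indicator_of_mem h, indicator_of_mem (mem_preimage.2 h)]; rfl
  · rw [indicator_of_notMem h, indicator_of_notMem (show p ∉ polarCoord.symm ⁻¹' B1 from h),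
      smul_zero]

lemma lintegral_Ioo_rpow_eq_top {s : ℝ} (hs : s ≤ -1) :
    ∫⁻ r in Ioo (0 : ℝ) 1, ENNReal.ofReal (r ^ s) = ⊤ := by
  by_contra h
  have hint := (lintegral_ofReal_ne_top_iff_integrable
    (by fun_prop) (ae_restrict_of_forall_mem measurableSet_Ioo fun r hr => ?_)).1 h
  · rw [← IntegrableOn, intervalIntegral.integrableOn_Ioo_rpow_iff one_pos] at hint
    linarith
  · exact Real.rpow_nonneg hr.1.le s

lemma lintegral_B1_eq_top_of_homogeneous {F : ℝ × ℝ → ℝ≥0∞} {G : ℝ → ℝ≥0∞} {q : ℝ}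
    (hq : 2 ≤ q) (hG : AEMeasurable G (volume.restrict (Ioo (-π) π)))
    (hG0 : ∫⁻ t in Ioo (-π) π, G t ≠ 0)
    (hF : ∀ᵐ p ∂(volume.restrict (Ioo 0 1 ×ˢ Ioo (-π) π)),
      F (polarCoord.symm p) = ENNReal.ofReal (p.1 ^ (-q)) * G p.2) :
    ∫⁻ x in B1, F x = ⊤ := by
  have hpolar : ∀ᵐ p ∂(volume.restrict (Ioo 0 1 ×ˢ Ioo (-π) π)),
      ENNReal.ofReal p.1 * F (polarCoord.symm p) = ENNReal.ofReal (p.1 ^ (1 - q)) * G p.2 := by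
    filter_upwards [hF, ae_restrict_mem (measurableSet_Ioo.prod measurableSet_Ioo)]
      with p hp hmem
    have hr : 0 < p.1 := hmem.1.1
    rw [hp, ← mul_assoc, ← ENNReal.ofReal_mul hr.le, sub_eq_add_neg, Real.rpow_add hr,
      Real.rpow_one]
  rw [lintegral_B1_eq_polar, lintegral_congr_ae hpolar, Measure.volume_eq_prod,
    ← Measure.prod_restrict,
    lintegral_prod_mul (f := fun r => ENNReal.ofReal (r ^ (1 - q))) (by fun_prop) hG,
    lintegral_Ioo_rpow_eq_top (by linarith), ENNReal.top_mul hG0]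

lemma enorm_div_rpow {a r : ℝ} (hr : 0 < r) {q : ℝ} (hq : 0 ≤ q) :
    ‖a / r‖ₑ ^ q = ENNReal.ofReal (r ^ (-q)) * ENNReal.ofReal (|a| ^ q) := by
  rw [Real.enorm_eq_ofReal_abs, ENNReal.ofReal_rpow_of_nonneg (abs_nonneg _) hq,
    ← ENNReal.ofReal_mul (by positivity), abs_div, abs_of_pos hr,
    Real.div_rpow (abs_nonneg _) hr.le, Real.rpow_neg hr.le, div_eq_inv_mul]

lemma ae_enorm_rpow_hessian_vbeta_polarCoord_symm {β : ℝ → ℝ} (hβ : Differentiable ℝ β)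
    (hae : ∀ᵐ t : ℝ, DifferentiableAt ℝ (deriv β) t) {q : ℝ} (hq : 0 ≤ q) :
    ∀ᵐ p ∂(volume.restrict (Ioo 0 1 ×ˢ Ioo (-π) π)),
      ‖√(hnormSq (vbeta β) (polarCoord.symm p))‖ₑ ^ q =
        ENNReal.ofReal (p.1 ^ (-q)) * ENNReal.ofReal (|β p.2 + deriv (deriv β) p.2| ^ q) := by
  have hdiff : ∀ᵐ p : ℝ × ℝ, DifferentiableAt ℝ (deriv β) p.2 := by
    rw [Measure.volume_eq_prod]; exact Measure.quasiMeasurePreserving_snd.ae hae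
  filter_upwards [ae_restrict_of_ae hdiff,
    ae_restrict_mem (measurableSet_Ioo.prod measurableSet_Ioo)] with p hd hp
  rw [sqrt_hnormSq_vbeta_polarCoord_symm hβ ⟨hp.1.1, hp.2⟩ hd, enorm_div_rpow hp.1.1 hq,
    abs_abs]

lemma lintegral_ofReal_abs_rpow_ne_zero {α : Type*} [MeasurableSpace α] {μ : Measure α}
    {w : α → ℝ} (hw : AEMeasurable w μ) (q : ℝ) (h : ∫ t, |w t| ∂μ ≠ 0) :
    ∫⁻ t, ENNReal.ofReal (|w t| ^ q) ∂μ ≠ 0 := by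
  rw [Ne, lintegral_eq_zero_iff' (by fun_prop)]
  refine fun h0 => h (integral_eq_zero_of_ae ?_)
  filter_upwards [h0] with t ht
  rw [Pi.zero_apply, ENNReal.ofReal_eq_zero] at ht
  by_contra hne
  exact (Real.rpow_pos_of_pos ((abs_nonneg _).lt_of_ne' hne) q).not_ge ht

theorem Function.Periodic.deriv {𝕜 F : Type*} [NontriviallyNormedField 𝕜]
    [NormedAddCommGroup F] [NormedSpace 𝕜 F] {f : 𝕜 → F} {c : 𝕜}
    (h : Function.Periodic f c) : Function.Periodic (deriv f) c := fun t => by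
  rw [← deriv_comp_add_const, h.funext]

lemma Function.Periodic.setIntegral_Ioo_neg_pi_pi {E : Type*} [NormedAddCommGroup E]
    [NormedSpace ℝ E] {f : ℝ → E} (h : Function.Periodic f (2 * π)) :
    ∫ t in Ioo (-π) π, f t = ∫ t in (0 : ℝ)..(2 * π), f t := by
  have hshift := h.intervalIntegral_add_eq (-π) 0
  rwa [zero_add, show -π + 2 * π = π by ring,
    intervalIntegral.integral_of_le (by linarith [pi_pos]),
    integral_Ioc_eq_integral_Ioo] at hshift

theorem hessian_of_cone_not_Lp_general (p : ℝ) (β : ℝ → ℝ)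
    (hβ : MemW2p p β)
    (hpos : 0 < ∫ t in (0:ℝ)..(2 * π), |β t + deriv (deriv β) t|) :
    ∀ q : ℝ, 2 ≤ q →
      ¬ MemLp (fun x => Real.sqrt (hnormSq (vbeta β) x)) (ENNReal.ofReal q)
        (volume.restrict B1) := by
  obtain ⟨hper, hβ1, hae, -⟩ := hβ
  intro q hq hmem
  have hw : Measurable fun t => β t + deriv (deriv β) t :=
    hβ1.continuous.measurable.add (measurable_deriv _)
  have hwper : Function.Periodic (fun t => |β t + deriv (deriv β) t|) (2 * π) := fun t => by
    simp only [hper t, hper.deriv.deriv t]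
  have htop := lintegral_B1_eq_top_of_homogeneous
    (F := fun x => ‖√(hnormSq (vbeta β) x)‖ₑ ^ q) hq
    (hw.abs.pow_const q).ennreal_ofReal.aemeasurable
    (lintegral_ofReal_abs_rpow_ne_zero hw.aemeasurable q
      (hwper.setIntegral_Ioo_neg_pi_pi ▸ hpos.ne'))
    (ae_enorm_rpow_hessian_vbeta_polarCoord_symm (hβ1.differentiable one_ne_zero) hae
      (by linarith))
  have hlt := lintegral_rpow_enorm_lt_top_of_eLpNorm_lt_top
    (ENNReal.ofReal_pos.2 (by linarith)).ne'
    ENNReal.ofReal_ne_top hmem.eLpNorm_lt_top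
  rw [ENNReal.toReal_ofReal (by linarith)] at hlt
  exact hlt.ne htop

/-- if `∫ |β + β''| > 0`, the Hessian of the cone `v_β` fails to be
in `L^p(B₁)` for every `p ≥ 2`. -/
theorem hessian_of_cone_not_Lp (p : ℝ) (hp : 2 < p) (β : ℝ → ℝ)
    (hβ : MemW2p p β)
    (hpos : 0 < ∫ t in (0:ℝ)..(2 * π), |β t + deriv (deriv β) t|) :
    ∀ q : ℝ, 2 ≤ q →
      ¬ MemLp (fun x => Real.sqrt (hnormSq (vbeta β) x)) (ENNReal.ofReal q)
        (volume.restrict B1) :=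
  hessian_of_cone_not_Lp_general p β hβ hpos
end
end

section
/- Let β ∈ C^∞(S¹) and define γ(t) = β(t)e_t + β'(t)e_t^⊥ with e_t = (cos t, sin t). Suppose that γ(t) = γ(t + π) holds for ℋ¹-almost every t in {t : β(t)+β''(t) ≠ 0}, where S¹ is identified with ℝ/(2πℤ). Then β(t + π) = -β(t) for every t ∈ S¹. -/
open MeasureTheory Real Set
noncomputable section

/-- The boundary gradient curve `γ(t) = β(t)e_t + β'(t)e_t^⊥`. -/
def bgc (β : ℝ → ℝ) (t : ℝ) : ℝ × ℝ := β t • eT t + deriv β t • eTperp t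

/-- if `γ(t) = γ(t+π)` for a.e. `t` with `β(t) + β''(t) ≠ 0`, then
`β(t+π) = -β(t)` for every `t`. -/
theorem antiperiodic_of_gamma_matching (β : ℝ → ℝ)
    (hβ : ContDiff ℝ (⊤ : ℕ∞) β) (hper : Function.Periodic β (2 * π))
    (hmatch : ∀ᵐ t : ℝ ∂(volume.restrict {t : ℝ | β t + deriv (deriv β) t ≠ 0}),
      bgc β t = bgc β (t + π)) :
    ∀ t : ℝ, β (t + π) = -β t := by
 -- proof body
  -- `g t = β (t+π) + β t`; we show `g ≡ 0`.
  have hβ' : ContDiff ℝ (⊤ : ℕ∞) β := hβ.of_le (by simp)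
  have hd1 : ContDiff ℝ (⊤ : ℕ∞) (deriv β) := (contDiff_infty_iff_deriv.mp hβ').2
  have hd2 : ContDiff ℝ (⊤ : ℕ∞) (deriv (deriv β)) := (contDiff_infty_iff_deriv.mp hd1).2
  set U : Set ℝ := {t : ℝ | β t + deriv (deriv β) t ≠ 0} with hUdef
  have hUopen : IsOpen U := by
    have hc : Continuous fun t => β t + deriv (deriv β) t :=
      hβ'.continuous.add hd2.continuous
    exact isOpen_ne_fun hc continuous_const
  set g : ℝ → ℝ := fun t => β (t + π) + β t with hgdef
  have hgC : ContDiff ℝ (⊤ : ℕ∞) g :=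
    (hβ'.comp (contDiff_id.add contDiff_const)).add hβ'
  have h1top : ((⊤ : ℕ∞) : WithTop ℕ∞) ≠ 0 := by simp
  have hgdiff : Differentiable ℝ g := hgC.differentiable h1top
  have hderivg : deriv g = fun t => deriv β (t + π) + deriv β t := by
    funext t
    have h1 : DifferentiableAt ℝ (fun s : ℝ => β (s + π)) t :=
      ((hβ'.differentiable h1top) (t + π)).comp t
        ((differentiable_id.add_const π) t)
    have h2 : DifferentiableAt ℝ β t := (hβ'.differentiable h1top) t
    have hsum : deriv g t = deriv (fun s : ℝ => β (s + π)) t + deriv β t := deriv_add h1 h2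
    rw [hsum, deriv_comp_add_const]
  have hgC' : ContDiff ℝ (⊤ : ℕ∞) (deriv g) := (contDiff_infty_iff_deriv.mp hgC).2
  have hderivg2 : deriv (deriv g) = fun t => deriv (deriv β) (t + π) + deriv (deriv β) t := by
    rw [hderivg]
    funext t
    have h1 : DifferentiableAt ℝ (fun s : ℝ => deriv β (s + π)) t :=
      ((hd1.differentiable h1top) (t + π)).comp t
        ((differentiable_id.add_const π) t)
    have h2 : DifferentiableAt ℝ (deriv β) t := (hd1.differentiable h1top) t
    have hsum : deriv (fun s : ℝ => deriv β (s + π) + deriv β s) t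
        = deriv (fun s : ℝ => deriv β (s + π)) t + deriv (deriv β) t := deriv_add h1 h2
    rw [hsum, deriv_comp_add_const]
  -- g is π-periodic
  have hgper : ∀ t : ℝ, g (t + π) = g t := by
    intro t
    have h2π : β (t + π + π) = β t := by
      have := hper t
      rw [show t + π + π = t + 2 * π by ring]
      exact this
    simp only [hgdef, h2π]
    ring
  -- pointwise consequence of matching
  have hpoint : ∀ t : ℝ, bgc β t = bgc β (t + π) → g t = 0 := by
    intro t h
    have h1 := congrArg Prod.fst h
    have h2 := congrArg Prod.snd h
    simp only [bgc, eT, eTperp, Prod.smul_mk, Prod.mk_add_mk, smul_eq_mul,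
      Real.cos_add_pi, Real.sin_add_pi] at h1 h2
    have hsc := Real.sin_sq_add_cos_sq t
    show β (t + π) + β t = 0
    linear_combination Real.cos t * h1 + Real.sin t * h2 - (β t + β (t + π)) * hsc
  -- g = 0 a.e. on U, hence g = 0 on U by continuity
  have hae : ∀ᵐ t ∂(volume.restrict U), g t = 0 := hmatch.mono fun t ht => hpoint t ht
  have hgU : ∀ t ∈ U, g t = 0 := by
    intro t ht
    by_contra hne
    have hSopen : IsOpen ({t : ℝ | g t ≠ 0} ∩ U) :=
      (isOpen_ne_fun hgC.continuous continuous_const).inter hUopen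
    have hμ : volume ({t : ℝ | g t ≠ 0} ∩ U) = 0 := by
      have := hae
      rw [MeasureTheory.ae_iff] at this
      rw [MeasureTheory.Measure.restrict_apply
        (isOpen_ne_fun hgC.continuous continuous_const).measurableSet] at this
      exact this
    have : ({t : ℝ | g t ≠ 0} ∩ U) = ∅ := (hSopen.measure_eq_zero_iff volume).mp hμ
    exact absurd this (Set.nonempty_iff_ne_empty.mp ⟨t, hne, ht⟩)
  -- g vanishes on the open set W = U ∪ (·+π)⁻¹ U
  set W : Set ℝ := U ∪ (fun t => t + π) ⁻¹' U with hWdef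
  have hWopen : IsOpen W := hUopen.union (hUopen.preimage (continuous_id.add continuous_const))
  have hgW : ∀ t ∈ W, g t = 0 := by
    rintro t (ht | ht)
    · exact hgU t ht
    · rw [← hgper t]; exact hgU (t + π) ht
  -- the key ODE fact: g + g'' = 0 everywhere
  have hkey : ∀ t : ℝ, g t + deriv (deriv g) t = 0 := by
    intro t
    by_cases htW : t ∈ W
    · have hev : g =ᶠ[nhds t] fun _ => (0 : ℝ) :=
        Filter.eventuallyEq_of_mem (hWopen.mem_nhds htW) hgW
      have hev' : deriv g =ᶠ[nhds t] deriv (fun _ => (0 : ℝ)) := hev.deriv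
      have hev'' : deriv g =ᶠ[nhds t] fun _ => (0 : ℝ) := by
        simpa using hev'
      have h2 : deriv (deriv g) t = deriv (fun _ => (0 : ℝ)) t := hev''.deriv_eq
      rw [hev.self_of_nhds, h2, deriv_const]
      simp
    · simp only [hWdef, Set.mem_union, Set.mem_preimage] at htW
      push_neg at htW
      obtain ⟨h1, h2⟩ := htW
      have e1 : β t + deriv (deriv β) t = 0 := not_not.mp h1
      have e2 : β (t + π) + deriv (deriv β) (t + π) = 0 := not_not.mp h2
      rw [hderivg2]
      simp only [hgdef]
      linarith
  -- A and B are constant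
  set A : ℝ → ℝ := fun t => g t * Real.cos t - deriv g t * Real.sin t with hAdef
  set B : ℝ → ℝ := fun t => g t * Real.sin t + deriv g t * Real.cos t with hBdef
  have hgd' : Differentiable ℝ (deriv g) := hgC'.differentiable h1top
  have hAdiff : Differentiable ℝ A :=
    (hgdiff.mul Real.differentiable_cos).sub (hgd'.mul Real.differentiable_sin)
  have hBdiff : Differentiable ℝ B :=
    (hgdiff.mul Real.differentiable_sin).add (hgd'.mul Real.differentiable_cos)
  have hderivA : ∀ t : ℝ, deriv A t = 0 := by
    intro t
    have hthis : deriv A t = -(g t + deriv (deriv g) t) * Real.sin t := by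
      rw [hAdef]
      rw [deriv_fun_sub ((hgdiff t).fun_mul (Real.differentiable_cos t))
        ((hgd' t).fun_mul (Real.differentiable_sin t)),
        deriv_fun_mul (hgdiff t) (Real.differentiable_cos t),
        deriv_fun_mul (hgd' t) (Real.differentiable_sin t),
        Real.deriv_cos, Real.deriv_sin]
      ring
    rw [hthis, hkey t]
    ring
  have hderivB : ∀ t : ℝ, deriv B t = 0 := by
    intro t
    have hthis : deriv B t = (g t + deriv (deriv g) t) * Real.cos t := by
      rw [hBdef]
      rw [deriv_fun_add ((hgdiff t).fun_mul (Real.differentiable_sin t))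
        ((hgd' t).fun_mul (Real.differentiable_cos t)),
        deriv_fun_mul (hgdiff t) (Real.differentiable_sin t),
        deriv_fun_mul (hgd' t) (Real.differentiable_cos t),
        Real.deriv_cos, Real.deriv_sin]
      ring
    rw [hthis, hkey t]
    ring
  have hAconst : ∀ t : ℝ, A t = A 0 := fun t => is_const_of_deriv_eq_zero hAdiff hderivA t 0
  have hBconst : ∀ t : ℝ, B t = B 0 := fun t => is_const_of_deriv_eq_zero hBdiff hderivB t 0
  -- closed form for g
  have hform : ∀ t : ℝ, g t = g 0 * Real.cos t + deriv g 0 * Real.sin t := by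
    intro t
    have hA := hAconst t
    have hB := hBconst t
    simp only [hAdef, hBdef, Real.cos_zero, Real.sin_zero, mul_one, mul_zero, sub_zero,
      zero_add, add_zero] at hA hB
    linear_combination Real.cos t * hA + Real.sin t * hB - g t * Real.sin_sq_add_cos_sq t
  -- conclude g ≡ 0
  have hgzero : ∀ t : ℝ, g t = 0 := by
    intro t
    have h1 := hform (t + π)
    rw [Real.cos_add_pi, Real.sin_add_pi, hgper t, hform t] at h1
    linarith [hform t]
  intro t
  have := hgzero t
  simp only [hgdef] at this
  linarith
end
end
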